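/- arXiv:1802.03920 — 2 statements merged into one kernel-verified Lean document; each statement's English description precedes it below -/
import Mathlib

section
/- Let p be a prime, q = p^ℓ a power of p, and t ≤ s ≤ d integers with q ≤ s+1 and s ≡ t (mod q). Then the minrank over F_p of the graph K_q(d,s,t) is at most C(d, q-1). -/
/-- A matrix `M` over a field `F` represents a simple graph `G` if all diagonal entries are
nonzero and entries at distinct non-adjacent pairs of vertices are zero. -/
def Represents {V F : Type*} [Field F] (G : SimpleGraph V) (M : Matrix V V F) : Prop :=
  (∀ v, M v v ≠ 0) ∧ ∀ u v : V, u ≠ v → ¬G.Adj u v → M u v = 0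

/-- The minrank of a simple graph `G` over a field `F`. -/
noncomputable def minrank (F : Type*) [Field F] {V : Type*} [Fintype V] [DecidableEq V]
    (G : SimpleGraph V) : ℕ :=
  sInf {r : ℕ | ∃ M : Matrix V V F, Represents G M ∧ M.rank = r}

/-- The generalized Kneser graph `K(d, s, T)`: vertices are the `s`-subsets of `[d]`, and two
distinct sets are adjacent iff the size of their intersection lies in `T`. -/
def kneser (d s : ℕ) (T : Set ℕ) : SimpleGraph {A : Finset (Fin d) // A.card = s} where
  Adj A B := A ≠ B ∧ (A.1 ∩ B.1).card ∈ T
  symm := ⟨fun A B h => ⟨h.1.symm, by rw [Finset.inter_comm]; exact h.2⟩⟩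
  loopless := ⟨fun A h => h.1 rfl⟩

/-- The graph `K_q(d, s, t)`: vertices are the `s`-subsets of `[d]`, and two distinct sets
`A, B` are adjacent iff `|A ∩ B| ≡ t (mod q)`. -/
def kneserMod (d s q t : ℕ) : SimpleGraph {A : Finset (Fin d) // A.card = s} where
  Adj A B := A ≠ B ∧ (A.1 ∩ B.1).card ≡ t [MOD q]
  symm := ⟨fun A B h => ⟨h.1.symm, by rw [Finset.inter_comm]; exact h.2⟩⟩
  loopless := ⟨fun A h => h.1 rfl⟩

/-!
Put `c = q - 1 - s % q`, so that `s + c ≡ -1 (mod q)`, and let `M A B = C(|A ∩ B| + c, q - 1)`.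
By Lucas' theorem `C(n, q - 1)` is nonzero mod `p` exactly when `n ≡ -1 (mod q)`, so `M` is
nonzero mod `p` precisely where `|A ∩ B| ≡ s ≡ t (mod q)`, and it represents `K_q(d, s, t)`.
The rank of an integer matrix mod `p` is at most its rank over `ℚ`. Over `ℚ`, Vandermonde's
identity gives `M = ∑ j, C(c, q - 1 - j) • W_j W_jᵀ`, with `W_j` the inclusion matrix of
`s`-sets versus `j`-sets, and `W_{q-1} W'_j = C(s - j, q - 1 - j) • W_j` puts every column of `M`
in the column space of `W_{q-1}`, which has `C(d, q - 1)` columns.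
-/

open Finset Matrix

-- A nontrivial relation divided by the gcd of its coefficients stays nontrivial over `K`.
theorem linearIndependent_int_of_map_intCast (K : Type*) [Field K] {ι m : Type*} [Fintype ι]
    {v : ι → m → ℤ} (h : LinearIndependent K fun i => (Int.cast ∘ v i : m → K)) :
    LinearIndependent ℤ v := by
  rw [Fintype.linearIndependent_iff] at h ⊢
  intro g hg
  by_contra! hne
  obtain ⟨i₀, hi₀⟩ := hne
  obtain ⟨g', hg_eq, hgcd'⟩ := Finset.extract_gcd g (univ_nonempty_iff.mpr ⟨i₀⟩)
  have hgcd_ne_zero : univ.gcd g ≠ 0 :=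
    fun h0 => hi₀ (Finset.gcd_eq_zero_iff.mp h0 i₀ (mem_univ _))
  have hprimitive : ∑ i, g' i • v i = 0 := by
    have : univ.gcd g • ∑ i, g' i • v i = 0 := by
      simp_rw [smul_sum, smul_smul, ← hg_eq _ (mem_univ _)]
      exact hg
    exact (smul_eq_zero.mp this).resolve_left hgcd_ne_zero
  have hcast : ∀ i, (g' i : K) = 0 := by
    refine h _ (funext fun j => ?_)
    simpa using congrArg (Int.cast : ℤ → K) (congrFun hprimitive j)
  have hchar : (ringChar K : ℤ) ∣ univ.gcd g' :=
    Finset.dvd_gcd fun i _ => (CharP.intCast_eq_zero_iff K _ _).mp (hcast i)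
  rw [hgcd'] at hchar
  exact CharP.ringChar_ne_one
    (Nat.dvd_one.mp (Int.natCast_dvd_natCast.mp (by exact_mod_cast hchar)))

theorem LinearIndependent.map_intCast_rat {ι m : Type*} {v : ι → m → ℤ}
    (h : LinearIndependent ℤ v) : LinearIndependent ℚ fun i => (Int.cast ∘ v i : m → ℚ) := by
  have hinj : Function.Injective (LinearMap.compLeft (Algebra.linearMap ℤ ℚ) m) :=
    fun x y hxy => funext fun j => by simpa using congrFun hxy j
  exact (LinearIndependent.iff_fractionRing ℤ ℚ).mp (h.map' _ (LinearMap.ker_eq_bot.mpr hinj))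

theorem Matrix.rank_map_intCast_le {m n : Type*} [Fintype m] [Fintype n] (K : Type*) [Field K]
    (M : Matrix m n ℤ) :
    (M.map (Int.cast : ℤ → K)).rank ≤ (M.map (Int.cast : ℤ → ℚ)).rank := by
  obtain ⟨κ, a, ha, hspan, hli⟩ := exists_linearIndependent' K (M.map (Int.cast : ℤ → K)).row
  have : Fintype κ := Fintype.ofInjective a ha
  have hliℚ : LinearIndependent ℚ ((M.map (Int.cast : ℤ → ℚ)).submatrix a id).row :=
    (linearIndependent_int_of_map_intCast K (v := M ∘ a) hli).map_intCast_rat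
  calc (M.map (Int.cast : ℤ → K)).rank = Fintype.card κ := by
        rw [rank_eq_finrank_span_row, ← hspan, finrank_span_eq_card hli]
    _ = ((M.map (Int.cast : ℤ → ℚ)).submatrix a id).rank := hliℚ.rank_matrix.symm
    _ ≤ _ := rank_submatrix_le _ _ _

section InclusionMatrix

variable (α : Type*) [Fintype α] [DecidableEq α]

theorem card_filter_superset_subset {J C : Finset α} (hJC : J ⊆ C) {a : ℕ} (hJa : J.card ≤ a) :
    #{S : {S : Finset α // S.card = a} | J ⊆ S.1 ∧ S.1 ⊆ C} =
      (C.card - J.card).choose (a - J.card) := by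
  rw [← card_sdiff_of_subset hJC, ← card_powersetCard]
  refine card_bij (fun S _ => S.1 \ J) ?_ ?_ ?_
  · intro S hS
    simp only [mem_filter, mem_univ, true_and] at hS
    exact mem_powersetCard.mpr ⟨sdiff_subset_sdiff hS.2 subset_rfl, by
      rw [card_sdiff_of_subset hS.1, S.2]⟩
  · intro S hS S' hS' h
    simp only [mem_filter, mem_univ, true_and] at hS hS'
    exact Subtype.ext (by rw [← sdiff_union_of_subset hS.1, h, sdiff_union_of_subset hS'.1])
  · intro T hT
    obtain ⟨hTC, hTcard⟩ := mem_powersetCard.mp hT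
    have hdisj : Disjoint T J := disjoint_of_subset_left hTC sdiff_disjoint
    refine ⟨⟨T ∪ J, by rw [card_union_of_disjoint hdisj, hTcard]; omega⟩, ?_,
      union_sdiff_cancel_right hdisj⟩
    simp only [mem_filter, mem_univ, true_and]
    exact ⟨subset_union_right, union_subset (hTC.trans sdiff_subset) hJC⟩

def inclusionMatrix (R : Type*) [Zero R] [One R] (a b : ℕ) :
    Matrix {A : Finset α // A.card = a} {S : Finset α // S.card = b} R :=
  of fun A S => if S.1 ⊆ A.1 then 1 else 0

variable {α}

theorem inclusionMatrix_mul_transpose_apply (R : Type*) [CommSemiring R] {a : ℕ} (j : ℕ)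
    (A B : {A : Finset α // A.card = a}) :
    (inclusionMatrix α R a j * (inclusionMatrix α R a j)ᵀ) A B =
      ((A.1 ∩ B.1).card.choose j : R) := by
  simp only [mul_apply, inclusionMatrix, transpose_apply, of_apply, mul_ite, mul_one, mul_zero,
    ← ite_and, ← subset_inter_iff, sum_boole]
  have h := card_filter_superset_subset α (empty_subset (A.1 ∩ B.1)) (Nat.zero_le j)
  simp only [empty_subset, true_and, card_empty, Nat.sub_zero] at h
  rw [inter_comm B.1, h]

theorem inclusionMatrix_mul_inclusionMatrix (R : Type*) [CommSemiring R] (s : ℕ) {a b : ℕ}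
    (hba : b ≤ a) :
    inclusionMatrix α R s a * inclusionMatrix α R a b =
      ((s - b).choose (a - b) : R) • inclusionMatrix α R s b := by
  ext A J
  simp only [mul_apply, inclusionMatrix, of_apply, mul_ite, mul_one, mul_zero, ← ite_and,
    sum_boole, Matrix.smul_apply, smul_eq_mul]
  split_ifs with hJA
  · rw [card_filter_superset_subset α hJA (J.2.trans_le hba), A.2, J.2]
  · rw [card_eq_zero.mpr (filter_eq_empty_iff.mpr fun S _ h => hJA (h.1.trans h.2)),
      Nat.cast_zero]

theorem rank_sum_choose_card_inter_le (F : Type*) [Field F] [CharZero F] {s k : ℕ}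
    (hks : k ≤ s) (c : ℕ → F) :
    (of fun A B : {A : Finset α // A.card = s} =>
      ∑ j ∈ range (k + 1), c j * ((A.1 ∩ B.1).card.choose j : F)).rank ≤
        (Fintype.card α).choose k := by
  let W := inclusionMatrix α F
  have hfactor : (of fun A B : {A : Finset α // A.card = s} =>
      ∑ j ∈ range (k + 1), c j * ((A.1 ∩ B.1).card.choose j : F)) =
      W s k * ∑ j ∈ range (k + 1), (c j / ((s - j).choose (k - j) : F)) • (W k j * (W s j)ᵀ) := by
    calc _ = ∑ j ∈ range (k + 1), c j • (W s j * (W s j)ᵀ) := by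
          ext A B
          simp [W, Matrix.sum_apply, inclusionMatrix_mul_transpose_apply]
      _ = _ := by
          rw [Matrix.mul_sum]
          refine sum_congr rfl fun j hj => ?_
          have hjk : j ≤ k := Nat.lt_succ_iff.mp (mem_range.mp hj)
          have hne : ((s - j).choose (k - j) : F) ≠ 0 := by
            exact_mod_cast (Nat.choose_pos (by omega)).ne'
          rw [Matrix.mul_smul, ← Matrix.mul_assoc, inclusionMatrix_mul_inclusionMatrix F s hjk,
            Matrix.smul_mul, smul_smul, div_mul_cancel₀ _ hne]
  rw [hfactor]
  calc _ ≤ (W s k).rank := rank_mul_le_left _ _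
    _ ≤ Fintype.card {S : Finset α // S.card = k} := rank_le_card_width _
    _ = (Fintype.card α).choose k := Fintype.card_finset_len k

end InclusionMatrix

theorem Choose.choose_modEq_choose_mod_pow_mul_choose_div_pow {p : ℕ} [Fact p.Prime]
    (ℓ n k : ℕ) :
    n.choose k ≡ (n % p ^ ℓ).choose (k % p ^ ℓ) * (n / p ^ ℓ).choose (k / p ^ ℓ) [ZMOD p] := by
  have hp : 0 < p := (Fact.out : p.Prime).pos
  have hdigit : ∀ m, ∀ i ∈ range ℓ, m % p ^ ℓ / p ^ i % p = m / p ^ i % p := by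
    intro m i hi
    have hiℓ : p ^ ℓ = p ^ i * p ^ (ℓ - i) := by
      rw [← pow_add, Nat.add_sub_cancel' (mem_range.mp hi).le]
    rw [hiℓ, Nat.mod_mul_right_div_self, Nat.mod_mod_of_dvd _
      (dvd_pow_self p (Nat.sub_ne_zero_of_lt (mem_range.mp hi)))]
  calc n.choose k
      ≡ (n / p ^ ℓ).choose (k / p ^ ℓ) *
          ((∏ i ∈ range ℓ, (n / p ^ i % p).choose (k / p ^ i % p) : ℕ) : ℤ) [ZMOD p] :=
        Choose.choose_modEq_choose_mul_prod_range_choose ℓ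
    _ = (n / p ^ ℓ).choose (k / p ^ ℓ) *
          ((∏ i ∈ range ℓ, (n % p ^ ℓ / p ^ i % p).choose (k % p ^ ℓ / p ^ i % p) : ℕ) : ℤ) := by
        congr 2
        exact prod_congr rfl fun i hi => by rw [hdigit n i hi, hdigit k i hi]
    _ ≡ (n / p ^ ℓ).choose (k / p ^ ℓ) * ((n % p ^ ℓ).choose (k % p ^ ℓ) : ℤ) [ZMOD p] := by
        push_cast
        exact (Choose.choose_modEq_prod_range_choose (Nat.mod_lt _ (pow_pos hp ℓ))
          (Nat.mod_lt _ (pow_pos hp ℓ))).symm.mul_left _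
    _ = _ := mul_comm _ _

theorem cast_choose_prime_pow_sub_one_ne_zero_iff (p : ℕ) [Fact p.Prime] (ℓ n : ℕ) :
    (n.choose (p ^ ℓ - 1) : ZMod p) ≠ 0 ↔ n % p ^ ℓ = p ^ ℓ - 1 := by
  have hq : 0 < p ^ ℓ := pow_pos (Fact.out : p.Prime).pos ℓ
  have hlucas := Choose.choose_modEq_choose_mod_pow_mul_choose_div_pow (p := p) ℓ n (p ^ ℓ - 1)
  rw [Nat.mod_eq_of_lt (Nat.sub_lt hq one_pos), Nat.div_eq_of_lt (Nat.sub_lt hq one_pos),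
    Nat.choose_zero_right, Nat.cast_one, mul_one, ← ZMod.intCast_eq_intCast_iff] at hlucas
  push_cast at hlucas
  rw [hlucas]
  rcases (Nat.le_sub_one_of_lt (Nat.mod_lt n hq)).eq_or_lt with h | h
  · simp [h]
  · simp [Nat.choose_eq_zero_of_lt h, h.ne]

theorem cast_choose_add_ne_zero_iff_modEq (p : ℕ) [Fact p.Prime] (ℓ m s : ℕ) :
    (((m + (p ^ ℓ - 1 - s % p ^ ℓ)).choose (p ^ ℓ - 1) : ℕ) : ZMod p) ≠ 0 ↔
      m ≡ s [MOD p ^ ℓ] := by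
  have hq : 0 < p ^ ℓ := pow_pos (Fact.out : p.Prime).pos ℓ
  set c := p ^ ℓ - 1 - s % p ^ ℓ
  have hsc : (s + c) % p ^ ℓ = p ^ ℓ - 1 := by
    have := Nat.mod_add_div s (p ^ ℓ)
    have := Nat.mod_lt s hq
    rw [show s + c = p ^ ℓ - 1 + p ^ ℓ * (s / p ^ ℓ) by omega, Nat.add_mul_mod_self_left,
      Nat.mod_eq_of_lt (by omega)]
  rw [cast_choose_prime_pow_sub_one_ne_zero_iff, ← hsc]
  exact ⟨Nat.ModEq.add_right_cancel' c, Nat.ModEq.add_right c⟩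

theorem minrank_kneserMod_le_general (p : ℕ) [Fact p.Prime] (ℓ : ℕ) (q : ℕ) (hq : q = p ^ ℓ)
    (d s t : ℕ) (hqs : q ≤ s + 1) (hst : s ≡ t [MOD q]) :
    minrank (ZMod p) (kneserMod d s q t) ≤ d.choose (q - 1) := by
  subst hq
  set c := p ^ ℓ - 1 - s % p ^ ℓ
  let M : Matrix {A : Finset (Fin d) // A.card = s} {A : Finset (Fin d) // A.card = s} ℤ :=
    of fun A B => ((((A.1 ∩ B.1).card + c).choose (p ^ ℓ - 1) : ℕ) : ℤ)
  have hentry (A B) :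
      M.map (Int.cast : ℤ → ZMod p) A B ≠ 0 ↔ (A.1 ∩ B.1).card ≡ s [MOD p ^ ℓ] := by
    simpa [M] using cast_choose_add_ne_zero_iff_modEq p ℓ (A.1 ∩ B.1).card s
  have hrep : Represents (kneserMod d s (p ^ ℓ) t) (M.map Int.cast) :=
    ⟨fun A => (hentry A A).mpr (by rw [inter_self, A.2]),
      fun A B hAB hadj => not_not.mp fun h => hadj ⟨hAB, ((hentry A B).mp h).trans hst⟩⟩
  have hvandermonde : M.map (Int.cast : ℤ → ℚ) = of fun A B => ∑ j ∈ range (p ^ ℓ - 1 + 1),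
      (c.choose (p ^ ℓ - 1 - j) : ℚ) * ((A.1 ∩ B.1).card.choose j : ℚ) := by
    ext A B
    simp [M, Nat.add_choose_eq, Finset.Nat.sum_antidiagonal_eq_sum_range_succ_mk, mul_comm]
  calc minrank (ZMod p) (kneserMod d s (p ^ ℓ) t) ≤ (M.map (Int.cast : ℤ → ZMod p)).rank :=
        Nat.sInf_le ⟨_, hrep, rfl⟩
    _ ≤ (M.map (Int.cast : ℤ → ℚ)).rank := M.rank_map_intCast_le _
    _ ≤ d.choose (p ^ ℓ - 1) := by
        rw [hvandermonde]
        simpa using rank_sum_choose_card_inter_le (α := Fin d) ℚ (by omega) _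

/-- For a prime `p`, a power `q = p ^ ℓ` of `p`, and integers `t ≤ s ≤ d` with `q ≤ s + 1` and
`s ≡ t (mod q)`, the minrank of `K_q(d, s, t)` over `F_p` is at most `C(d, q - 1)`. -/
theorem minrank_kneserMod_le (p : ℕ) [Fact p.Prime] (ℓ : ℕ) (q : ℕ) (hq : q = p ^ ℓ)
    (d s t : ℕ) (hts : t ≤ s) (hsd : s ≤ d) (hqs : q ≤ s + 1) (hst : s ≡ t [MOD q]) :
    minrank (ZMod p) (kneserMod d s q t) ≤ d.choose (q - 1) :=
  minrank_kneserMod_le_general p ℓ q hq d s t hqs hst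
end

section
/- For every prime p and integer d ≥ 1, let G_2(d,p) be the graph whose vertices are the self-orthogonal vectors of F_p^d (vectors v with ⟨v,v⟩ = 0), with two distinct vertices adjacent iff they are not orthogonal. Then the minrank of the complement of G_2(d,p) over F_p is at most C(d+p-2, p-1) + 1. -/
/-- The graph `G₂(d, p)`: vertices are the self-orthogonal vectors of `F_p^d`, with two
distinct vertices adjacent iff they are not orthogonal. -/
def selfOrthoGraph (d p : ℕ) : SimpleGraph {v : Fin d → ZMod p // ∑ i, v i * v i = 0} where
  Adj u v := u ≠ v ∧ ∑ i, u.1 i * v.1 i ≠ 0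
  symm := ⟨fun u v h => ⟨h.1.symm, by simpa [mul_comm] using h.2⟩⟩
  loopless := ⟨fun v h => h.1 rfl⟩

open Matrix

theorem minrank_le_rank {F V : Type*} [Field F] [Fintype V] [DecidableEq V]
    {G : SimpleGraph V} {M : Matrix V V F} (hM : Represents G M) : minrank F G ≤ M.rank :=
  Nat.sInf_le ⟨M, hM, rfl⟩

theorem dotProduct_pow_eq_sum_sym {R ι : Type*} [CommSemiring R] [Fintype ι] [DecidableEq ι]
    (x y : ι → R) (n : ℕ) :
    (x ⬝ᵥ y) ^ n =
      ∑ m : Sym ι n, (m.1.countPerms : R) * (m.1.map x).prod * (m.1.map y).prod := by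
  rw [dotProduct, Finset.sum_pow, Finset.sym_univ]
  refine Finset.sum_congr rfl fun m _ => ?_
  rw [mul_assoc, ← Multiset.prod_map_mul]

theorem rank_one_sub_dotProduct_pow_le {R V W ι : Type*} [CommRing R] [StrongRankCondition R]
    [Fintype W] [Fintype ι] [DecidableEq ι] (f : V → ι → R) (g : W → ι → R) (n : ℕ) :
    (of fun u v => 1 - (f u ⬝ᵥ g v) ^ n).rank ≤ (Fintype.card ι + n - 1).choose n + 1 := by
  let A : Matrix V (Option (Sym ι n)) R := of fun u k =>
    k.elim 1 fun m => -((m.1.countPerms : R) * (m.1.map (f u)).prod)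
  let B : Matrix (Option (Sym ι n)) W R := of fun k v => k.elim 1 fun m => (m.1.map (g v)).prod
  have hAB : (of fun u v => 1 - (f u ⬝ᵥ g v) ^ n) = A * B := by
    ext u v
    simp [A, B, mul_apply, Fintype.sum_option, dotProduct_pow_eq_sum_sym, sub_eq_add_neg]
  calc _ = (A * B).rank := by rw [hAB]
    _ ≤ Fintype.card (Option (Sym ι n)) := (rank_mul_le_left A B).trans (rank_le_card_width A)
    _ = _ := by rw [Fintype.card_option, Sym.card_sym_eq_choose]

theorem represents_compl_selfOrthoGraph (d p : ℕ) [Fact p.Prime] :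
    Represents (selfOrthoGraph d p)ᶜ (of fun u v => 1 - (u.1 ⬝ᵥ v.1) ^ (p - 1)) := by
  have hp : p - 1 ≠ 0 := Nat.sub_ne_zero_of_lt (Fact.out : p.Prime).one_lt
  refine ⟨fun v => ?_, fun u v huv hadj => ?_⟩
  · simp [dotProduct, v.2, zero_pow hp]
  · have horth : u.1 ⬝ᵥ v.1 ≠ 0 := fun h => hadj ⟨huv, fun hG => hG.2 h⟩
    simp [ZMod.pow_card_sub_one_eq_one horth]

theorem minrank_compl_selfOrthoGraph_le_general (p : ℕ) [Fact p.Prime] (d : ℕ) :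
    minrank (ZMod p) (selfOrthoGraph d p)ᶜ ≤ (d + p - 2).choose (p - 1) + 1 := by
  have hp : 1 ≤ p := (Fact.out : p.Prime).one_le
  refine (minrank_le_rank (represents_compl_selfOrthoGraph d p)).trans ?_
  refine (rank_one_sub_dotProduct_pow_le Subtype.val Subtype.val (p - 1)).trans_eq ?_
  rw [Fintype.card_fin]
  congr 2
  omega

/-- For every prime `p` and `d ≥ 1`, the minrank of the complement of `G₂(d, p)` over `F_p`
is at most `C(d + p - 2, p - 1) + 1`. -/
theorem minrank_compl_selfOrthoGraph_le (p : ℕ) [Fact p.Prime] (d : ℕ) (hd : 1 ≤ d) :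
    minrank (ZMod p) (selfOrthoGraph d p)ᶜ ≤ (d + p - 2).choose (p - 1) + 1 :=
  minrank_compl_selfOrthoGraph_le_general p d
end
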